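/- arXiv:1809.01249 — 3 statements merged into one kernel-verified Lean document; each statement's English description precedes it below -/
import Mathlib

section
/- Let G be a connected, bipartite (2-colorable), d-regular simple graph on M vertices with d > 0, and let A be its adjacency matrix. Then for every integer j ≥ 1, every marked vertex w : Fin j → Fin M, every jumping rate γ ∈ ℝ, and every time t ∈ ℝ, the success probability satisfies p_{A,j,γ,w}(t) ≤ 1 / 2^{j-1}. -/
open Matrix

/-- The j-th Kronecker power of an M×M matrix, indexed by functions `Fin j → Fin M`. -/
noncomputable def kronPow {M : ℕ} (A : Matrix (Fin M) (Fin M) ℝ) (j : ℕ) :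
    Matrix (Fin j → Fin M) (Fin j → Fin M) ℝ :=
  Matrix.of fun x y => ∏ i, A (x i) (y i)

/-- The search Hamiltonian `H = γ·A^{⊗j} + |w⟩⟨w|` as a complex matrix. -/
noncomputable def searchHam {M : ℕ} (A : Matrix (Fin M) (Fin M) ℝ) (j : ℕ)
    (γ : ℝ) (w : Fin j → Fin M) : Matrix (Fin j → Fin M) (Fin j → Fin M) ℂ :=
  (γ : ℂ) • (kronPow A j).map (fun r : ℝ => (r : ℂ)) + Matrix.single w w 1

/-- The uniform initial state with all `M^j` entries equal to `1/√(M^j)`. -/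
noncomputable def uniformState (M j : ℕ) : (Fin j → Fin M) → ℂ :=
  fun _ => ((1 / Real.sqrt ((M : ℝ) ^ j) : ℝ) : ℂ)

/-- The success probability `|ψ(t)_w|²` where `ψ(t) = exp(-i·t·H)·s`. -/
noncomputable def successProb {M : ℕ} (A : Matrix (Fin M) (Fin M) ℝ) (j : ℕ)
    (γ : ℝ) (w : Fin j → Fin M) (t : ℝ) : ℝ :=
  ‖(((NormedSpace.exp
      ((-(Complex.I * (t : ℂ))) • searchHam A j γ w)).mulVec (uniformState M j)) w)‖ ^ 2

/-!
Fix a proper colouring `c : Fin M → Fin 2`. A nonzero entry of `A^{⊗j}` joins tuples `x, y`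
with `c ∘ y = c ∘ x + 1`, and `|w⟩⟨w|` is diagonal, so `H` lies in the closed subalgebra of
matrices vanishing between tuples whose colour patterns do not agree up to a global flip, and
hence so does `exp(-itH)`. The amplitude at `w` therefore only sees the uniform state on the
class `S` of `w`, and unitarity bounds the success probability by `#S / M^j`. Counting edges
from both sides shows that a `d`-regular bipartite graph with `d > 0` has colour classes of size
`M / 2`, so `#S ≤ 2 (M / 2)^j`.
-/

namespace Matrix

variable {n : Type*} [Fintype n] [DecidableEq n]

def supportedOn (α : Type*) [CommSemiring α] (R : n → n → Prop) [IsPreorder n R] :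
    Subalgebra α (Matrix n n α) where
  carrier := {X | ∀ x y, ¬ R x y → X x y = 0}
  mul_mem' {X Y} hX hY x y hxy := by
    refine Finset.sum_eq_zero fun z _ => show X x z * Y z y = 0 from ?_
    by_cases hxz : R x z
    · rw [hY z y fun hzy => hxy (_root_.trans hxz hzy), mul_zero]
    · rw [hX x z hxz, zero_mul]
  add_mem' hX hY x y hxy := by simp [hX x y hxy, hY x y hxy]
  algebraMap_mem' a x y hxy := by
    rw [algebraMap_matrix_apply, if_neg fun h : x = y => hxy (h ▸ refl x)]

theorem isClosed_supportedOn (α : Type*) [CommSemiring α] [TopologicalSpace α] [T1Space α]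
    (R : n → n → Prop) [IsPreorder n R] : IsClosed (supportedOn α R : Set (Matrix n n α)) := by
  change IsClosed {X : Matrix n n α | ∀ x y, ¬ R x y → X x y = 0}
  simp only [Set.ofPred_forall]
  exact isClosed_iInter fun x => isClosed_iInter fun y => isClosed_iInter fun _ =>
    isClosed_singleton.preimage (by fun_prop)

theorem exp_mem_supportedOn {α : Type*} [Field α] [CharZero α] [TopologicalSpace α]
    [IsTopologicalRing α] [T1Space α] {R : n → n → Prop} [IsPreorder n R] {X : Matrix n n α}
    (hX : X ∈ supportedOn α R) : NormedSpace.exp X ∈ supportedOn α R :=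
  NormedSpace.exp_mem (R := α) (isClosed_supportedOn α R) hX

theorem IsHermitian.exp_neg_I_mul_smul_mem_unitaryGroup {H : Matrix n n ℂ} (hH : H.IsHermitian)
    (t : ℝ) : NormedSpace.exp ((-(Complex.I * t)) • H) ∈ unitaryGroup n ℂ := by
  set B := (-(Complex.I * t)) • H
  have hB : Bᴴ = -B := by
    rw [conjTranspose_smul, hH.eq, ← neg_smul]
    congr 1
    simp
  rw [mem_unitaryGroup_iff, star_eq_conjTranspose, ← exp_conjTranspose, hB,
    ← exp_add_of_commute _ _ (Commute.refl B).neg_right, add_neg_cancel, NormedSpace.exp_zero]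

theorem norm_toLp_mulVec_of_mem_unitaryGroup {𝕜 : Type*} [RCLike 𝕜] {U : Matrix n n 𝕜}
    (hU : U ∈ unitaryGroup n 𝕜) (v : n → 𝕜) :
    ‖WithLp.toLp 2 (U *ᵥ v)‖ = ‖WithLp.toLp 2 v‖ := by
  rw [← toEuclideanCLM_toLp]
  exact ContinuousLinearMap.norm_map_of_mem_unitary (Unitary.map_mem toEuclideanCLM hU) _

theorem norm_mulVec_apply_sq_le_of_mem_unitaryGroup {𝕜 : Type*} [RCLike 𝕜] {U : Matrix n n 𝕜}
    (hU : U ∈ unitaryGroup n 𝕜) {i : n} {s : Finset n} (hUs : ∀ y ∉ s, U i y = 0)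
    (v : n → 𝕜) : ‖(U *ᵥ v) i‖ ^ 2 ≤ ∑ y ∈ s, ‖v y‖ ^ 2 := by
  set v' : n → 𝕜 := fun y => if y ∈ s then v y else 0
  have hv' : (U *ᵥ v) i = (U *ᵥ v') i := by
    refine Finset.sum_congr rfl fun y _ => ?_
    by_cases hy : y ∈ s <;> simp [v', hy, hUs]
  calc ‖(U *ᵥ v) i‖ ^ 2 ≤ ‖WithLp.toLp 2 (U *ᵥ v')‖ ^ 2 := by
        rw [hv']
        gcongr
        exact PiLp.norm_apply_le (WithLp.toLp 2 (U *ᵥ v')) i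
    _ = ∑ y ∈ s, ‖v y‖ ^ 2 := by
        rw [norm_toLp_mulVec_of_mem_unitaryGroup hU, EuclideanSpace.norm_sq_eq]
        simp [v', apply_ite, Finset.sum_ite_mem]

end Matrix

open Finset

namespace SimpleGraph

variable {V : Type*} [Fintype V] {G : SimpleGraph V}

theorem Coloring.isBipartiteWith_fin_two (c : G.Coloring (Fin 2)) :
    G.IsBipartiteWith ↑({v | c v = 0} : Finset V) ↑({v | c v = 1} : Finset V) where
  disjoint := by
    rw [disjoint_coe]
    exact disjoint_filter.mpr fun v _ h0 h1 => by simp [h0] at h1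
  mem_of_adj v w hvw := by
    have hne := c.valid hvw
    simp only [coe_filter, mem_univ, true_and, Set.mem_ofPred_eq]
    omega

theorem IsRegularOfDegree.two_mul_card_colorClass [DecidableRel G.Adj] {d : ℕ}
    (hreg : G.IsRegularOfDegree d) (hd : 0 < d) (c : G.Coloring (Fin 2)) (b : Fin 2) :
    2 * #{v | c v = b} = Fintype.card V := by
  have hdeg := isBipartiteWith_sum_degrees_eq c.isBipartiteWith_fin_two
  simp only [hreg.degree_eq, sum_const, smul_eq_mul] at hdeg
  have hsame := Nat.eq_of_mul_eq_mul_right hd hdeg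
  have htotal : Fintype.card V = #{v | c v = 0} + #{v | c v = 1} := by
    rw [← card_univ, card_eq_sum_card_fiberwise (f := c) (t := univ)
      (fun _ _ => mem_coe.2 (mem_univ _)), Fin.sum_univ_two]
  match b with
  | 0 | 1 => omega

end SimpleGraph

section ColorPattern

variable {V ι : Type*}

/-- For a connected bipartite graph with proper colouring `c`, the classes of this relation are
the connected components of the Kronecker powers. -/
def ColorPatternRel (c : V → Fin 2) (x y : ι → V) : Prop :=
  ∃ b : Fin 2, ∀ i, c (y i) = c (x i) + b

instance (c : V → Fin 2) : IsPreorder (ι → V) (ColorPatternRel c) where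
  refl _ := ⟨0, fun _ => (add_zero _).symm⟩
  trans _ _ _ := fun ⟨a, ha⟩ ⟨b, hb⟩ => ⟨a + b, fun i => by rw [hb, ha, add_assoc]⟩

instance [Fintype ι] (c : V → Fin 2) : DecidableRel (ColorPatternRel (ι := ι) c) :=
  fun _ _ => by unfold ColorPatternRel; infer_instance

theorem SimpleGraph.Coloring.colorPatternRel_of_adj {G : SimpleGraph V}
    (c : G.Coloring (Fin 2)) {x y : ι → V} (hxy : ∀ i, G.Adj (x i) (y i)) :
    ColorPatternRel c x y := by
  refine ⟨1, fun i => ?_⟩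
  have hne := c.valid (hxy i)
  omega

theorem card_colorPatternRel_mul_two_pow_le [Fintype V] [DecidableEq V] [Fintype ι]
    [DecidableEq ι] (c : V → Fin 2) (hc : ∀ b, 2 * #{v | c v = b} = Fintype.card V)
    (x : ι → V) :
    #{y | ColorPatternRel c x y} * 2 ^ Fintype.card ι ≤ 2 * Fintype.card V ^ Fintype.card ι := by
  have hcover : ({y | ColorPatternRel c x y} : Finset (ι → V)) ⊆
      univ.biUnion fun b : Fin 2 => Fintype.piFinset fun i => {v | c v = c (x i) + b} := by
    intro y hy
    obtain ⟨b, hb⟩ := (mem_filter.1 hy).2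
    exact mem_biUnion.2 ⟨b, mem_univ _, Fintype.mem_piFinset.2 fun i => by simp [hb]⟩
  calc #{y | ColorPatternRel c x y} * 2 ^ Fintype.card ι
      ≤ (∑ b : Fin 2, ∏ i, #{v | c v = c (x i) + b}) * 2 ^ Fintype.card ι := by
        gcongr
        exact (card_le_card hcover).trans (card_biUnion_le.trans_eq (by simp))
    _ = ∑ b : Fin 2, ∏ i, 2 * #{v | c v = c (x i) + b} := by
        rw [sum_mul]
        simp only [prod_mul_distrib, prod_const, card_univ, mul_comm]
    _ = 2 * Fintype.card V ^ Fintype.card ι := by simp [hc]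

end ColorPattern

section SearchHamiltonian

variable {M j : ℕ}

theorem kronPow_isSymm {A : Matrix (Fin M) (Fin M) ℝ} (hA : A.IsSymm) : (kronPow A j).IsSymm :=
  IsSymm.ext fun x y => by simp only [kronPow, of_apply, hA.apply]

theorem searchHam_isHermitian {A : Matrix (Fin M) (Fin M) ℝ} (hA : A.IsSymm) (γ : ℝ)
    (w : Fin j → Fin M) : (searchHam A j γ w).IsHermitian := by
  refine IsHermitian.add (IsHermitian.smul ?_ (Complex.conj_ofReal γ)) ?_
  · exact (isHermitian_iff_isSymm.2 (kronPow_isSymm hA)).map _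
      fun r => (Complex.conj_ofReal r).symm
  · exact IsHermitian.ext fun x y => by simp [single_apply, and_comm]

theorem searchHam_mem_supportedOn {A : Matrix (Fin M) (Fin M) ℝ}
    {R : (Fin j → Fin M) → (Fin j → Fin M) → Prop} [IsPreorder _ R]
    (hA : kronPow A j ∈ supportedOn ℝ R) (γ : ℝ) (w : Fin j → Fin M) :
    searchHam A j γ w ∈ supportedOn ℂ R := by
  refine add_mem (Subalgebra.smul_mem _ ?_ _) ?_
  · intro x y hxy
    simp [hA x y hxy]
  · intro x y hxy
    exact single_apply_of_ne _ _ _ _ _ fun h => hxy (h.1 ▸ h.2 ▸ refl _)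

theorem kronPow_adjMatrix_mem_supportedOn (G : SimpleGraph (Fin M)) [DecidableRel G.Adj]
    (c : G.Coloring (Fin 2)) :
    kronPow (G.adjMatrix ℝ) j ∈ supportedOn ℝ (ColorPatternRel (ι := Fin j) c) := by
  intro x y hxy
  obtain ⟨i, hi⟩ : ∃ i, ¬ G.Adj (x i) (y i) := by
    by_contra! h
    exact hxy (c.colorPatternRel_of_adj h)
  exact prod_eq_zero (mem_univ i) (by simp [hi])

theorem norm_uniformState_sq (y : Fin j → Fin M) : ‖uniformState M j y‖ ^ 2 = 1 / M ^ j := by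
  simp [uniformState]

end SearchHamiltonian

theorem bipartite_initiator_success_prob_bound_general
    {M d : ℕ} (G : SimpleGraph (Fin M)) [DecidableRel G.Adj]
    (hbip : G.Colorable 2)
    (hreg : G.IsRegularOfDegree d) (hd : 0 < d) :
    ∀ j : ℕ, 1 ≤ j → ∀ (w : Fin j → Fin M) (γ t : ℝ),
      successProb (G.adjMatrix ℝ) j γ w t ≤ 1 / 2 ^ (j - 1) := by
  intro j hj w γ t
  obtain ⟨c⟩ := hbip
  set S : Finset (Fin j → Fin M) := {y | ColorPatternRel c w y}
  set U := NormedSpace.exp ((-(Complex.I * t)) • searchHam (G.adjMatrix ℝ) j γ w)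
  have hU : U ∈ unitaryGroup _ ℂ :=
    (searchHam_isHermitian G.isSymm_adjMatrix γ w).exp_neg_I_mul_smul_mem_unitaryGroup t
  have hUS : U ∈ supportedOn ℂ (ColorPatternRel c) := exp_mem_supportedOn <|
    Subalgebra.smul_mem _ (searchHam_mem_supportedOn (kronPow_adjMatrix_mem_supportedOn G c) γ w) _
  have hS : #S * 2 ^ (j - 1) * 2 ≤ M ^ j * 2 := by
    rw [mul_assoc, pow_sub_one_mul (by omega), mul_comm (M ^ j)]
    simpa using card_colorPatternRel_mul_two_pow_le c (hreg.two_mul_card_colorClass hd c) w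
  have hM : 0 < M := Fin.pos (w ⟨0, hj⟩)
  calc successProb (G.adjMatrix ℝ) j γ w t ≤ ∑ y ∈ S, ‖uniformState M j y‖ ^ 2 :=
        norm_mulVec_apply_sq_le_of_mem_unitaryGroup hU
          (fun y hy => hUS w y (by simpa [S] using hy)) _
    _ = #S / M ^ j := by simp [norm_uniformState_sq, div_eq_mul_inv]
    _ ≤ 1 / 2 ^ (j - 1) := by
        rw [div_le_div_iff₀ (by positivity) (by positivity), one_mul]
        exact_mod_cast Nat.le_of_mul_le_mul_right hS two_pos

/-- For a connected, regular, bipartite initiator, the success probability of quantum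
search on the `j`-th Kronecker power never exceeds `1/2^{j-1}`. -/
theorem bipartite_initiator_success_prob_bound
    {M d : ℕ} (G : SimpleGraph (Fin M)) [DecidableRel G.Adj]
    (hconn : G.Connected) (hbip : G.Colorable 2)
    (hreg : G.IsRegularOfDegree d) (hd : 0 < d) :
    ∀ j : ℕ, 1 ≤ j → ∀ (w : Fin j → Fin M) (γ t : ℝ),
      successProb (G.adjMatrix ℝ) j γ w t ≤ 1 / 2 ^ (j - 1) :=
  bipartite_initiator_success_prob_bound_general G hbip hreg hd
end

section
/- Let A be a symmetric M×M real matrix with an eigenvalue λ₁ > 0, and suppose there is a constant c with 0 ≤ c < λ₁ such that every eigenvalue μ of A with μ ≠ λ₁ satisfies |μ| ≤ c. Then for every integer j ≥ 1, every eigenvalue μ' of the j-th Kronecker power A^{⊗j} with μ' ≠ λ₁^j satisfies |μ'| ≤ c·λ₁^{j-1}. -/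
/-!
By the spectral theorem `A = U D Uᵀ` with `U` orthogonal and `D` the diagonal of eigenvalues.
The Kronecker power is multiplicative and commutes with transposition, so `A^{⊗j}` is
orthogonally conjugate to the diagonal matrix with entries `∏ i, λ_{x i}`: every eigenvalue of
`A^{⊗j}` is a product of `j` eigenvalues of `A`. If it differs from `λ₁^j`, one factor is a
non-principal eigenvalue, of absolute value at most `c`, and the others have absolute value
at most `λ₁`.
-/

open Matrix

open Finset

section KronPow

variable {M : ℕ}

lemma kronPow_apply (A : Matrix (Fin M) (Fin M) ℝ) (j : ℕ) (x y : Fin j → Fin M) :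
    kronPow A j x y = ∏ i, A (x i) (y i) := rfl

lemma kronPow_mul (A B : Matrix (Fin M) (Fin M) ℝ) (j : ℕ) :
    kronPow (A * B) j = kronPow A j * kronPow B j := by
  ext x y
  simp only [kronPow_apply, mul_apply, Fintype.prod_sum, prod_mul_distrib]

lemma kronPow_diagonal (d : Fin M → ℝ) (j : ℕ) :
    kronPow (diagonal d) j = diagonal fun x => ∏ i, d (x i) := by
  ext x y
  by_cases h : x = y
  · simp [kronPow_apply, h]
  · obtain ⟨i, hi⟩ := Function.ne_iff.mp h
    simp only [kronPow_apply, diagonal_apply_ne _ h]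
    exact prod_eq_zero (mem_univ i) (diagonal_apply_ne _ hi)

lemma kronPow_one (j : ℕ) : kronPow (1 : Matrix (Fin M) (Fin M) ℝ) j = 1 := by
  simpa using kronPow_diagonal (fun _ : Fin M => (1 : ℝ)) j

lemma kronPow_star (A : Matrix (Fin M) (Fin M) ℝ) (j : ℕ) :
    kronPow (star A) j = star (kronPow A j) := by
  ext x y
  simp [kronPow_apply]

lemma kronPow_mem_unitaryGroup {U : Matrix (Fin M) (Fin M) ℝ}
    (hU : U ∈ unitaryGroup (Fin M) ℝ) (j : ℕ) :
    kronPow U j ∈ unitaryGroup (Fin j → Fin M) ℝ := by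
  rw [mem_unitaryGroup_iff', ← kronPow_star, ← kronPow_mul, mem_unitaryGroup_iff'.mp hU,
    kronPow_one]

lemma spectrum_kronPow_mul_diagonal_mul_star {U : Matrix (Fin M) (Fin M) ℝ}
    (hU : U ∈ unitaryGroup (Fin M) ℝ) (d : Fin M → ℝ) (j : ℕ) :
    spectrum ℝ (kronPow (U * diagonal d * star U) j) =
      Set.range fun x : Fin j → Fin M => ∏ i, d (x i) := by
  rw [kronPow_mul, kronPow_mul, kronPow_diagonal, kronPow_star,
    Unitary.spectrum_star_right_conjugate (U := ⟨_, kronPow_mem_unitaryGroup hU j⟩),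
    spectrum_diagonal]

theorem Matrix.IsHermitian.spectrum_kronPow {A : Matrix (Fin M) (Fin M) ℝ}
    (hA : A.IsHermitian) (j : ℕ) :
    spectrum ℝ (kronPow A j) =
      Set.range fun x : Fin j → Fin M => ∏ i, hA.eigenvalues (x i) := by
  have hA' : A = hA.eigenvectorUnitary * diagonal hA.eigenvalues *
      star (hA.eigenvectorUnitary : Matrix (Fin M) (Fin M) ℝ) := by
    simpa using hA.spectral_theorem
  conv_lhs => rw [hA']
  exact spectrum_kronPow_mul_diagonal_mul_star hA.eigenvectorUnitary.2 _ j

end KronPow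

lemma Matrix.mem_spectrum_of_mulVec_eq_smul {n K : Type*} [Fintype n] [DecidableEq n] [Field K]
    {A : Matrix n n K} {μ : K} {u : n → K} (hu : u ≠ 0) (h : A *ᵥ u = μ • u) :
    μ ∈ spectrum K A := by
  rw [← spectrum_toLin']
  exact (Module.End.hasEigenvalue_of_hasEigenvector
    ⟨Module.End.mem_eigenspace_iff.mpr h, hu⟩).mem_spectrum

lemma Matrix.IsHermitian.eigenvectorBasis_ne_zero {n 𝕜 : Type*} [RCLike 𝕜] [Fintype n]
    [DecidableEq n] {A : Matrix n n 𝕜} (hA : A.IsHermitian) (k : n) :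
    ⇑(hA.eigenvectorBasis k) ≠ 0 := by
  simpa using hA.eigenvectorBasis.orthonormal.ne_zero k

lemma abs_prod_le_mul_pow_card_sub_one {ι : Type*} [Fintype ι] [DecidableEq ι] {f : ι → ℝ}
    {c L : ℝ} (hL : ∀ i, |f i| ≤ L) {i₀ : ι} (hi₀ : |f i₀| ≤ c) :
    |∏ i, f i| ≤ c * L ^ (Fintype.card ι - 1) := by
  rw [abs_prod, ← mul_prod_erase _ _ (mem_univ i₀), ← card_univ,
    ← card_erase_of_mem (mem_univ i₀), ← prod_const]
  exact mul_le_mul hi₀ (prod_le_prod (fun _ _ => abs_nonneg _) fun i _ => hL i)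
    (prod_nonneg fun _ _ => abs_nonneg _) ((abs_nonneg _).trans hi₀)

theorem kronPow_nonprincipal_eigenvalue_bound_general {M : ℕ}
    (A : Matrix (Fin M) (Fin M) ℝ) (hA : A.IsSymm)
    (lam₁ : ℝ)
    (c : ℝ) (hc : c < lam₁)
    (hgap : ∀ (μ : ℝ) (v : Fin M → ℝ), v ≠ 0 → A.mulVec v = μ • v → μ ≠ lam₁ → |μ| ≤ c)
    (j : ℕ) (μ' : ℝ) (u : (Fin j → Fin M) → ℝ) (hu : u ≠ 0)
    (hμ' : (kronPow A j).mulVec u = μ' • u) (hne : μ' ≠ lam₁ ^ j) :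
    |μ'| ≤ c * lam₁ ^ (j - 1) := by
  have hH : A.IsHermitian := isHermitian_iff_isSymm.mpr hA
  obtain ⟨x, rfl⟩ : μ' ∈ Set.range fun x : Fin j → Fin M => ∏ i, hH.eigenvalues (x i) := by
    rw [← hH.spectrum_kronPow]
    exact mem_spectrum_of_mulVec_eq_smul hu hμ'
  have hgap' (k : Fin M) : hH.eigenvalues k ≠ lam₁ → |hH.eigenvalues k| ≤ c :=
    hgap _ _ (hH.eigenvectorBasis_ne_zero k) (hH.mulVec_eigenvectorBasis k)
  obtain ⟨i₀, hi₀⟩ : ∃ i, hH.eigenvalues (x i) ≠ lam₁ := by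
    contrapose! hne
    simp [hne]
  have hc₀ : |hH.eigenvalues (x i₀)| ≤ c := hgap' _ hi₀
  have hle (k : Fin M) : |hH.eigenvalues k| ≤ lam₁ := by
    by_cases hk : hH.eigenvalues k = lam₁
    · rw [hk, abs_of_nonneg (by linarith [abs_nonneg (hH.eigenvalues (x i₀))])]
    · exact (hgap' k hk).trans hc.le
  simpa using abs_prod_le_mul_pow_card_sub_one (fun i => hle (x i)) hc₀

/-- If the principal eigenvalue `λ₁ > 0` of a symmetric matrix dominates all other
eigenvalues in magnitude by a bound `c`, then every non-principal eigenvalue of the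
Kronecker power `A^{⊗j}` is bounded in magnitude by `c·λ₁^{j-1}`. -/
theorem kronPow_nonprincipal_eigenvalue_bound {M : ℕ}
    (A : Matrix (Fin M) (Fin M) ℝ) (hA : A.IsSymm)
    (lam₁ : ℝ) (hpos : 0 < lam₁)
    (hprin : ∃ v : Fin M → ℝ, v ≠ 0 ∧ A.mulVec v = lam₁ • v)
    (c : ℝ) (hc0 : 0 ≤ c) (hc : c < lam₁)
    (hgap : ∀ (μ : ℝ) (v : Fin M → ℝ), v ≠ 0 → A.mulVec v = μ • v → μ ≠ lam₁ → |μ| ≤ c)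
    (j : ℕ) (hj : 1 ≤ j) (μ' : ℝ) (u : (Fin j → Fin M) → ℝ) (hu : u ≠ 0)
    (hμ' : (kronPow A j).mulVec u = μ' • u) (hne : μ' ≠ lam₁ ^ j) :
    |μ'| ≤ c * lam₁ ^ (j - 1) :=
  kronPow_nonprincipal_eigenvalue_bound_general A hA lam₁ c hc hgap j μ' u hu hμ' hne
end

section
/- Let G be a connected, bipartite (2-colorable), d-regular simple graph on M vertices with d > 0, and let j ≥ 1. Define the j-th tensor power graph G^{×j} on vertex set Fin j → Fin M by declaring x and y adjacent if and only if G.Adj (x(i)) (y(i)) for every i ∈ Fin j. Then G^{×j} has exactly 2^{j-1} connected components, and every connected component contains exactly M^j / 2^{j-1} vertices. -/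
/-!
Fix a proper colouring `c : Fin M → ZMod 2` of `G`. Along an edge of the tensor power every
coordinate changes colour, so the differences `c (x i) - c (x 0)` are invariant. Conversely, if
they agree for `x` and `y`, then all walks `x i ⟶ y i` in `G` have lengths of one parity; since a
walk can be lengthened by two (step to a neighbour and back), they can be taken of one common
length, and together they form a walk from `x` to `y`. So the components are the `2^(j-1)` fibres
of the invariant. Counting edges from either side shows that regularity makes the two colour
classes equal, of size `M/2`, so each fibre has `M * (M/2)^(j-1)` elements.
-/

/-- The `j`-th tensor (Kronecker) power of a simple graph `G` on `Fin M`: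
vertices are functions `Fin j → Fin M`, and `x ~ y` iff `G.Adj (x i) (y i)` for every
`i`. (The clause `x ≠ y` only rules out loops; for `j ≥ 1` the condition
`∀ i, G.Adj (x i) (y i)` already forces `x ≠ y`, so this is the same graph.) -/
def tensorPow {M : ℕ} (G : SimpleGraph (Fin M)) (j : ℕ) :
    SimpleGraph (Fin j → Fin M) where
  Adj x y := x ≠ y ∧ ∀ i, G.Adj (x i) (y i)
  symm := ⟨fun x y h => ⟨h.1.symm, fun i => (h.2 i).symm⟩⟩
  loopless := ⟨fun x h => h.1 rfl⟩

namespace SimpleGraph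

variable {V : Type*} {G : SimpleGraph V} {u v : V}

namespace Coloring

variable (C : G.Coloring (ZMod 2))

theorem zmodTwo_apply_eq_add_one (h : G.Adj u v) : C v = C u + 1 := by
  have key : ∀ a b : ZMod 2, a ≠ b → b = a + 1 := by decide
  exact key _ _ (C.valid h)

theorem zmodTwo_apply_eq_add_length (p : G.Walk u v) : C v = C u + p.length := by
  induction p with
  | nil => simp
  | cons h p ih =>
    rw [ih, C.zmodTwo_apply_eq_add_one h, Walk.length_cons]
    push_cast
    ring

theorem card_zmodTwo_colorClass_eq [Fintype V] [DecidableRel G.Adj] {d : ℕ}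
    (hreg : G.IsRegularOfDegree d) (hd : 0 < d) (a b : ZMod 2) :
    Fintype.card {u // C u = a} = Fintype.card {u // C u = b} := by
  classical
  suffices h01 : Fintype.card {u // C u = 0} = Fintype.card {u // C u = 1} by
    have key : ∀ a : ZMod 2, a = 0 ∨ a = 1 := by decide
    rcases key a with rfl | rfl <;> rcases key b with rfl | rfl <;> simp [h01]
  have hbip :
      G.IsBipartiteWith ↑(Finset.univ.filter (C · = 0)) ↑(Finset.univ.filter (C · = 1)) :=
    { disjoint := by
        rw [Finset.disjoint_coe]
        exact Finset.disjoint_filter.mpr fun u _ h0 h1 => by simp [h0] at h1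
      mem_of_adj := fun u v h => by
        have hv := C.zmodTwo_apply_eq_add_one h
        have key : ∀ a b : ZMod 2, b = a + 1 → a = 0 ∧ b = 1 ∨ a = 1 ∧ b = 0 := by decide
        simpa using key _ _ hv }
  have := isBipartiteWith_sum_degrees_eq hbip
  simp only [hreg.degree_eq, Finset.sum_const, smul_eq_mul] at this
  simpa [Fintype.card_subtype] using Nat.eq_of_mul_eq_mul_right hd this

theorem two_mul_card_zmodTwo_colorClass [Fintype V] [DecidableRel G.Adj] {d : ℕ}
    (hreg : G.IsRegularOfDegree d) (hd : 0 < d) (b : ZMod 2) :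
    2 * Fintype.card {u // C u = b} = Fintype.card V := by
  rw [← Fintype.card_congr (Equiv.sigmaFiberEquiv C), Fintype.card_sigma]
  simp [C.card_zmodTwo_colorClass_eq hreg hd _ b]

end Coloring

theorem Walk.exists_length_eq_add_two_mul (p : G.Walk u v) (hu : ∃ w, G.Adj u w) (k : ℕ) :
    ∃ q : G.Walk u v, q.length = p.length + 2 * k := by
  induction k with
  | zero => exact ⟨p, rfl⟩
  | succ k ih =>
    obtain ⟨q, hq⟩ := ih
    obtain ⟨w, hw⟩ := hu
    exact ⟨.cons hw (.cons hw.symm q), by simp [hq]; ring⟩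

end SimpleGraph

theorem Nat.exists_eq_add_two_mul_of_natCast_eq {ι : Type*} [Fintype ι] (L : ι → ℕ)
    (a : ZMod 2) (h : ∀ i, (L i : ZMod 2) = a) : ∃ N, ∀ i, ∃ k, N = L i + 2 * k := by
  refine ⟨2 * ∑ i, L i + a.val, fun i => ⟨(2 * ∑ i, L i + a.val - L i) / 2, ?_⟩⟩
  have hle : L i ≤ ∑ i, L i :=
    Finset.single_le_sum (fun i _ => Nat.zero_le _) (Finset.mem_univ i)
  have hpar : L i % 2 = a.val % 2 := by
    rw [← ZMod.natCast_eq_natCast_iff', ZMod.natCast_zmod_val, h]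
  omega

namespace tensorPow

open SimpleGraph

variable {M n : ℕ} {G : SimpleGraph (Fin M)}

theorem adj_iff {x y : Fin (n + 1) → Fin M} :
    (tensorPow G (n + 1)).Adj x y ↔ ∀ i, G.Adj (x i) (y i) :=
  ⟨And.right, fun h => ⟨fun hxy => G.irrefl (hxy ▸ h 0), h⟩⟩

theorem reachable_of_forall_walk_length_eq (N : ℕ) {x y : Fin (n + 1) → Fin M}
    (h : ∀ i, ∃ p : G.Walk (x i) (y i), p.length = N) :
    (tensorPow G (n + 1)).Reachable x y := by
  induction N generalizing x with
  | zero =>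
    obtain rfl : x = y := funext fun i => (h i).elim fun p hp => p.eq_of_length_eq_zero hp
    rfl
  | succ N ih =>
    have hstep : ∀ i, ∃ z, G.Adj (x i) z ∧ ∃ q : G.Walk z (y i), q.length = N := by
      intro i
      obtain ⟨p, hp⟩ := h i
      have hp₀ : ¬p.Nil := Walk.not_nil_iff_lt_length.mpr (by omega)
      obtain ⟨z, hadj, q, rfl⟩ := Walk.not_nil_iff.mp hp₀
      exact ⟨z, hadj, q, by simpa using hp⟩
    choose z hz q hq using hstep
    exact (adj_iff.mpr hz).reachable.trans (ih fun i => ⟨q i, hq i⟩)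

variable (C : G.Coloring (ZMod 2))

def colorDiff (x : Fin (n + 1) → Fin M) : Fin n → ZMod 2 := fun k => C (x k.succ) - C (x 0)

theorem colorDiff_eq_iff {x y : Fin (n + 1) → Fin M} :
    colorDiff C x = colorDiff C y ↔ ∀ i, C (y i) - C (x i) = C (y 0) - C (x 0) := by
  constructor
  · intro h i
    refine Fin.cases rfl (fun k => ?_) i
    have := congrFun h k
    simp only [colorDiff] at this
    linear_combination -this
  · intro h
    funext k
    have := h k.succ
    simp only [colorDiff]
    linear_combination -this

theorem colorDiff_eq_of_adj {x y : Fin (n + 1) → Fin M} (h : (tensorPow G (n + 1)).Adj x y) :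
    colorDiff C x = colorDiff C y :=
  (colorDiff_eq_iff C).mpr fun i => by
    simp [C.zmodTwo_apply_eq_add_one (adj_iff.mp h i), C.zmodTwo_apply_eq_add_one (adj_iff.mp h 0)]

theorem reachable_iff_colorDiff_eq (hconn : G.Connected) (hnbr : ∀ u, ∃ v, G.Adj u v)
    {x y : Fin (n + 1) → Fin M} :
    (tensorPow G (n + 1)).Reachable x y ↔ colorDiff C x = colorDiff C y := by
  constructor
  · rintro ⟨p⟩
    induction p with
    | nil => rfl
    | cons h _ ih => exact (colorDiff_eq_of_adj C h).trans ih
  · intro h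
    have p : ∀ i, G.Walk (x i) (y i) := fun i => (hconn (x i) (y i)).some
    obtain ⟨N, hN⟩ := Nat.exists_eq_add_two_mul_of_natCast_eq (fun i => (p i).length)
      (C (y 0) - C (x 0)) fun i => by
        rw [← (colorDiff_eq_iff C).mp h i, C.zmodTwo_apply_eq_add_length (p i)]
        ring
    refine reachable_of_forall_walk_length_eq N fun i => ?_
    obtain ⟨k, hk⟩ := hN i
    obtain ⟨q, hq⟩ := (p i).exists_length_eq_add_two_mul (hnbr _) k
    exact ⟨q, hq.trans hk.symm⟩

theorem colorDiff_surjective {u₀ u₁ : Fin M} (h : G.Adj u₀ u₁) :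
    Function.Surjective (colorDiff (n := n) C) := by
  intro v
  refine ⟨Fin.cons u₀ fun k => if v k = 0 then u₀ else u₁, funext fun k => ?_⟩
  have key : ∀ a : ZMod 2, a ≠ 0 → a = 1 := by decide
  by_cases hv : v k = 0
  · simp [colorDiff, hv]
  · simp [colorDiff, C.zmodTwo_apply_eq_add_one h, key _ hv]

theorem card_colorDiff_fiber {m : ℕ} (hm : ∀ b, Fintype.card {u // C u = b} = m)
    (v : Fin n → ZMod 2) : Fintype.card {x // colorDiff C x = v} = M * m ^ n := by
  let e : {x // colorDiff C x = v} ≃ Σ u₀ : Fin M, ∀ k, {u // C u - C u₀ = v k} :=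
    ((Fin.consEquiv fun _ => Fin M).symm.subtypeEquiv fun x => funext_iff).trans
      ((Equiv.subtypeProdEquivSigmaSubtype fun u₀ f => ∀ k, C (f k) - C u₀ = v k).trans
        (Equiv.sigmaCongrRight fun u₀ =>
          Equiv.subtypePiEquivPi (p := fun k u => C u - C u₀ = v k)))
  simp [Fintype.card_congr e, sub_eq_iff_eq_add, hm]

theorem supp_connectedComponentMk (hconn : G.Connected) (hnbr : ∀ u, ∃ v, G.Adj u v)
    (x : Fin (n + 1) → Fin M) :
    ((tensorPow G (n + 1)).connectedComponentMk x).supp = {y | colorDiff C y = colorDiff C x} := by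
  ext y
  rw [ConnectedComponent.mem_supp_iff, ConnectedComponent.eq,
    reachable_iff_colorDiff_eq C hconn hnbr]
  rfl

noncomputable def connectedComponentEquiv (hconn : G.Connected) (hnbr : ∀ u, ∃ v, G.Adj u v) :
    (tensorPow G (n + 1)).ConnectedComponent ≃ (Fin n → ZMod 2) :=
  Equiv.ofBijective
    (ConnectedComponent.lift (colorDiff C) fun _ _ p _ =>
      (reachable_iff_colorDiff_eq C hconn hnbr).mp p.reachable)
    ⟨ConnectedComponent.ind₂ fun _ _ h =>
        ConnectedComponent.sound ((reachable_iff_colorDiff_eq C hconn hnbr).mpr h),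
      have ⟨u₀⟩ := hconn.nonempty
      have ⟨_, h⟩ := hnbr u₀
      (colorDiff_surjective C h).forall.mpr fun x =>
        ⟨(tensorPow G (n + 1)).connectedComponentMk x, rfl⟩⟩

end tensorPow

/-- The `j`-th tensor power of a connected, regular, bipartite graph on `M` vertices has
exactly `2^{j-1}` connected components, each containing exactly `M^j / 2^{j-1}`
vertices. -/
theorem tensorPow_bipartite_components
    {M d : ℕ} (G : SimpleGraph (Fin M)) [DecidableRel G.Adj]
    (hconn : G.Connected) (hbip : G.Colorable 2)
    (hreg : G.IsRegularOfDegree d) (hd : 0 < d) (j : ℕ) (hj : 1 ≤ j) :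
    Nat.card (tensorPow G j).ConnectedComponent = 2 ^ (j - 1) ∧
    ∀ K : (tensorPow G j).ConnectedComponent,
      Nat.card K.supp = M ^ j / 2 ^ (j - 1) := by
  obtain ⟨n, rfl⟩ : ∃ n, j = n + 1 := ⟨j - 1, by omega⟩
  obtain ⟨C⟩ : Nonempty (G.Coloring (ZMod 2)) :=
    Nonempty.map (G.recolorOfEquiv (ZMod.finEquiv 2).toEquiv) hbip
  have hnbr : ∀ u, ∃ v, G.Adj u v := fun u => (G.degree_pos_iff_exists_adj u).mp (hreg u ▸ hd)
  obtain ⟨m, hm⟩ : ∃ m, ∀ b, Fintype.card {u // C u = b} = m :=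
    ⟨_, (C.card_zmodTwo_colorClass_eq hreg hd · 0)⟩
  have hM : 2 * m = M := by
    rw [← hm 0, C.two_mul_card_zmodTwo_colorClass hreg hd, Fintype.card_fin]
  simp only [Nat.add_sub_cancel]
  constructor
  · rw [Nat.card_congr (tensorPow.connectedComponentEquiv C hconn hnbr)]
    simp
  intro K
  refine SimpleGraph.ConnectedComponent.ind (fun x => ?_) K
  rw [tensorPow.supp_connectedComponentMk C hconn hnbr, Nat.card_eq_fintype_card]
  simp only [Set.coe_ofPred]
  rw [tensorPow.card_colorDiff_fiber C hm]
  refine (Nat.div_eq_of_eq_mul_left (by positivity) ?_).symm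
  subst hM
  ring
end
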